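/- Let N ≥ 1 be an integer, m > 1, T > 0 and r₁ > 0. Then there exists γ₀ ≥ 1 such that for every γ ≥ γ₀ and every r₀ ∈ [r₁/2, r₁], the function u(t,x) = A(t)^{−1} ( 1 + √(r(t)² − |x|²) ), with A(t) = ((m−1)(1+γt))^{1/(m−1)} and r(t) = r₀ + log(1+γt)/(γ(m−1)), satisfies at every point of the open set Q₀ = { (t,x) ∈ (0,T) × ℝ^N : |x| < r(t) } the pointwise differential inequality ∂_t u(t,x) ≤ div_x ( u^m ∇_x u / √(u² + |∇_x u|²) )(t,x). -/

import Mathlib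

open RealInnerProductSpace

noncomputable section

/-- Classical divergence of a vector field on `ℝ^N`: the sum of the partial
derivatives of the components. -/
def divergence {N : ℕ} (V : EuclideanSpace ℝ (Fin N) → EuclideanSpace ℝ (Fin N))
    (x : EuclideanSpace ℝ (Fin N)) : ℝ :=
  ∑ i, ⟪fderiv ℝ V x (EuclideanSpace.single i 1), EuclideanSpace.single i 1⟫

/-- The flux `u^m ∇u / √(u² + |∇u|²)` of the relativistic porous medium equation, as a
spatial vector field at time `t`. -/
def fluxRel {N : ℕ} (m : ℝ) (u : ℝ → EuclideanSpace ℝ (Fin N) → ℝ) (t : ℝ)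
    (x : EuclideanSpace ℝ (Fin N)) : EuclideanSpace ℝ (Fin N) :=
  (u t x ^ m / Real.sqrt (u t x ^ 2 + ‖gradient (u t) x‖ ^ 2)) • gradient (u t) x

/-- `A(t) = ((m−1)(1+γt))^{1/(m−1)}`. -/
def Arel (m γ t : ℝ) : ℝ := ((m - 1) * (1 + γ * t)) ^ ((1:ℝ)/(m-1))

/-- `r(t) = r₀ + log(1+γt)/(γ(m−1))`. -/
def rrel (m γ r₀ t : ℝ) : ℝ := r₀ + Real.log (1 + γ * t) / (γ * (m - 1))

/-- The discontinuous subsolution profile `u(t,x) = A(t)^{−1}(1 + √(r(t)² − |x|²))`. -/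
def uRel {N : ℕ} (m γ r₀ : ℝ) (t : ℝ) (x : EuclideanSpace ℝ (Fin N)) : ℝ :=
  (Arel m γ t)⁻¹ * (1 + Real.sqrt ((rrel m γ r₀ t) ^ 2 - ‖x‖ ^ 2))

/-! With `w = √(r² − |x|²)` and `a = A(t)⁻¹`, the profile is the spherical cap `a (1 + w)`, and its
flux is radial, `−aᵐ h(w) x` with `h(w) = (1 + w)ᵐ / √(r² + w³(2 + w))`. Hence the divergence is
`aᵐ (−N h(w) + |x|² h'(w) / w)`, while `A^{m−1} = (m−1)(1+γt)` makes `∂ₜu = aᵐ (−γ(1 + w) + r / w)`.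
After dividing by `aᵐ`, every term except `m |x|² (1+w)^{m−1} / (w √(r² + w³(2 + w)))` is bounded by
a constant `C` depending on `m, N, r₁` and `R = r₁ + T/(m−1) ≥ r`. Near the free boundary, `w ≤ δ`,
this positive term dominates the singular `r / w`; away from it `r / w ≤ R / δ`, and `γ ≥ R / δ + C`
absorbs everything that is left. -/

open Topology

section Radial

variable {N : ℕ}

lemma divergence_eq_trace (V : EuclideanSpace ℝ (Fin N) → EuclideanSpace ℝ (Fin N))
    (x : EuclideanSpace ℝ (Fin N)) :
    divergence V x = LinearMap.trace ℝ _ (fderiv ℝ V x).toLinearMap := by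
  classical
  simp [divergence, LinearMap.trace_eq_sum_inner _ (EuclideanSpace.basisFun (Fin N) ℝ),
    real_inner_comm]

lemma divergence_eq_of_eventuallyEq_radial {g : ℝ → ℝ} {g' : ℝ} {x : EuclideanSpace ℝ (Fin N)}
    (hg : HasDerivAt g g' (‖x‖ ^ 2))
    {V : EuclideanSpace ℝ (Fin N) → EuclideanSpace ℝ (Fin N)}
    (hV : V =ᶠ[𝓝 x] fun z => g (‖z‖ ^ 2) • z) :
    divergence V x = N * g (‖x‖ ^ 2) + 2 * ‖x‖ ^ 2 * g' := by
  have hF : HasFDerivAt (fun z => g (‖z‖ ^ 2) • z) _ x :=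
    (hg.comp_hasFDerivAt x (hasStrictFDerivAt_norm_sq x).hasFDerivAt).smul (hasFDerivAt_id x)
  rw [divergence_eq_trace, hV.fderiv_eq, hF.fderiv]
  simp [LinearMap.trace_id]
  ring

lemma hasGradientAt_comp_norm_sq {f : ℝ → ℝ} {f' : ℝ} {x : EuclideanSpace ℝ (Fin N)}
    (hf : HasDerivAt f f' (‖x‖ ^ 2)) :
    HasGradientAt (fun z => f (‖z‖ ^ 2)) ((2 * f') • x) x := by
  rw [hasGradientAt_iff_hasFDerivAt]
  refine (hf.comp_hasFDerivAt x (hasStrictFDerivAt_norm_sq x).hasFDerivAt).congr_fderiv ?_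
  ext v
  simp
  ring

end Radial

section Profile

variable {m r w : ℝ}

-- If `w² = r² − |x|²`, then `r² + w³(2 + w) = w²(1 + w)² + |x|²`.
def profileDen (r w : ℝ) : ℝ := √(r ^ 2 + w ^ 3 * (2 + w))

def fluxProfile (m r w : ℝ) : ℝ := (1 + w) ^ m / profileDen r w

def fluxProfileDeriv (m r w : ℝ) : ℝ :=
  (1 + w) ^ (m - 1) * (m / profileDen r w - (1 + w) * w ^ 2 * (3 + 2 * w) / profileDen r w ^ 3)

lemma profileDen_sq (hw : 0 ≤ w) : profileDen r w ^ 2 = r ^ 2 + w ^ 3 * (2 + w) :=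
  Real.sq_sqrt (by positivity)

lemma profileDen_pos (hw : 0 < w) : 0 < profileDen r w :=
  Real.sqrt_pos.2 (by positivity)

lemma le_profileDen (hw : 0 ≤ w) : r ≤ profileDen r w :=
  Real.le_sqrt_of_sq_le (by nlinarith [pow_nonneg hw 3])

lemma hasDerivAt_profileDen (hw : 0 < w) :
    HasDerivAt (profileDen r) (w ^ 2 * (3 + 2 * w) / profileDen r w) w := by
  have h : HasDerivAt (fun v => r ^ 2 + v ^ 3 * (2 + v)) (2 * (w ^ 2 * (3 + 2 * w))) w := by
    refine (((hasDerivAt_pow 3 w).mul ((hasDerivAt_id w).const_add 2)).const_add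
      (r ^ 2)).congr_deriv ?_
    simp only [id]
    ring
  refine (h.sqrt (by positivity)).congr_deriv ?_
  rw [profileDen]
  ring

lemma hasDerivAt_fluxProfile (hw : 0 < w) :
    HasDerivAt (fluxProfile m r) (fluxProfileDeriv m r w) w := by
  have hD := profileDen_pos (r := r) hw
  have h1w : (1 + w) ^ m = (1 + w) ^ (m - 1) * (1 + w) := by
    rw [← Real.rpow_add_one (by positivity), sub_add_cancel]
  have hpow : HasDerivAt (fun v => (1 + v) ^ m) (m * (1 + w) ^ (m - 1)) w := by
    simpa using ((hasDerivAt_id w).const_add 1).rpow_const (p := m) (Or.inl (by positivity))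
  refine (hpow.div (hasDerivAt_profileDen hw) hD.ne').congr_deriv ?_
  rw [fluxProfileDeriv, h1w]
  field_simp

end Profile

section Estimates

variable {m N r₁ R r w : ℝ}

def fluxErrorBound (m N r₁ R : ℝ) : ℝ :=
  (1 + R) ^ m * (2 * N / r₁ + 8 * R ^ 3 * (3 + 2 * R) / r₁ ^ 3)

lemma fluxProfile_error_le (hm : 0 ≤ m) (hN : 0 ≤ N) (hr₁ : 0 < r₁) (hw : 0 < w)
    (hwr : w ≤ r) (hr : r₁ / 2 ≤ r) (hrR : r ≤ R) :
    N * fluxProfile m r w + (r ^ 2 - w ^ 2) * (1 + w) ^ m * w * (3 + 2 * w) / profileDen r w ^ 3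
      ≤ fluxErrorBound m N r₁ R := by
  have hR : 0 < R := by linarith
  have hD : r₁ / 2 ≤ profileDen r w := hr.trans (le_profileDen hw.le)
  have hpow : (1 + w) ^ m ≤ (1 + R) ^ m := by gcongr; linarith
  have hs : r ^ 2 - w ^ 2 ≤ R ^ 2 := by nlinarith
  have hs0 : 0 ≤ r ^ 2 - w ^ 2 := by nlinarith
  have hwR : w ≤ R := hwr.trans hrR
  have h1 : N * fluxProfile m r w ≤ (1 + R) ^ m * (2 * N / r₁) := by
    rw [fluxProfile]
    calc N * ((1 + w) ^ m / profileDen r w) ≤ N * ((1 + R) ^ m / (r₁ / 2)) := by gcongr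
      _ = (1 + R) ^ m * (2 * N / r₁) := by field_simp
  have h2 : (r ^ 2 - w ^ 2) * (1 + w) ^ m * w * (3 + 2 * w) / profileDen r w ^ 3
      ≤ (1 + R) ^ m * (8 * R ^ 3 * (3 + 2 * R) / r₁ ^ 3) := by
    calc (r ^ 2 - w ^ 2) * (1 + w) ^ m * w * (3 + 2 * w) / profileDen r w ^ 3
        ≤ R ^ 2 * (1 + R) ^ m * R * (3 + 2 * R) / (r₁ / 2) ^ 3 := by
          gcongr
      _ = (1 + R) ^ m * (8 * R ^ 3 * (3 + 2 * R) / r₁ ^ 3) := by field_simp; ring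
  calc _ ≤ _ := add_le_add h1 h2
    _ = fluxErrorBound m N r₁ R := by rw [fluxErrorBound]; ring

lemma mul_profileDen_le (hm : 1 < m) (hw : 0 < w)
    (hsmall : 2 * m * w * (1 + w) ≤ (m - 1) * r) :
    r * profileDen r w ≤ m * (r ^ 2 - w ^ 2) := by
  have hmw : 0 < 2 * m * w := by positivity
  have hr : 0 < r := by nlinarith
  have hwr : 2 * m * w ≤ (m - 1) * r := by nlinarith
  have hm2 : (m - 1) ^ 2 ≤ m ^ 2 - 1 := by nlinarith
  have hww : 4 * m ^ 2 * (w * (1 + w)) ^ 2 ≤ (m ^ 2 - 1) * r ^ 2 := by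
    have := pow_le_pow_left₀ (by positivity) hsmall 2
    nlinarith
  have hmw2 : 4 * m ^ 2 * w ^ 2 ≤ (m ^ 2 - 1) * r ^ 2 := by
    have := pow_le_pow_left₀ hmw.le hwr 2
    nlinarith
  set s := r ^ 2 - w ^ 2 with hs_def
  have hs : 3 * r ^ 2 ≤ 4 * s := by nlinarith
  have hA : 3 * ((m ^ 2 - 1) * r ^ 2) ≤ 4 * (m ^ 2 * s - r ^ 2) := by rw [hs_def]; linarith
  have hB := mul_le_mul hs hA (by nlinarith) (by nlinarith)
  have hC : 4 * (r ^ 2 * (w * (1 + w)) ^ 2) ≤ (m ^ 2 - 1) * r ^ 2 * r ^ 2 := by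
    have : 4 * (w * (1 + w)) ^ 2 ≤ 4 * m ^ 2 * (w * (1 + w)) ^ 2 := by
      nlinarith [sq_nonneg (w * (1 + w))]
    nlinarith [sq_nonneg r]
  have hsq : (r * profileDen r w) ^ 2 ≤ (m * s) ^ 2 := by
    rw [mul_pow, profileDen_sq hw.le]
    nlinarith
  exact (pow_le_pow_iff_left₀ (mul_pos hr (profileDen_pos hw)).le (by nlinarith)
    two_ne_zero).1 hsq

lemma sub_fluxErrorBound_le (hm : 1 < m) (hN : 0 ≤ N) (hr₁ : 0 < r₁) (hw : 0 < w)
    (hwr : w ≤ r) (hr : r₁ / 2 ≤ r) (hrR : r ≤ R) :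
    m * (r ^ 2 - w ^ 2) / (w * profileDen r w) - fluxErrorBound m N r₁ R
      ≤ -N * fluxProfile m r w + (r ^ 2 - w ^ 2) / w * fluxProfileDeriv m r w := by
  have hD := profileDen_pos (r := r) hw
  have hs : 0 ≤ r ^ 2 - w ^ 2 := by nlinarith
  have hM : 0 ≤ m * (r ^ 2 - w ^ 2) / (w * profileDen r w) := by
    have : 0 < m := by linarith
    positivity
  have hP : 1 ≤ (1 + w) ^ (m - 1) := Real.one_le_rpow (by linarith) (by linarith)
  have h1w : (1 + w) ^ m = (1 + w) ^ (m - 1) * (1 + w) := by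
    rw [← Real.rpow_add_one (by positivity), sub_add_cancel]
  have hexpand : (r ^ 2 - w ^ 2) / w * fluxProfileDeriv m r w
      = (1 + w) ^ (m - 1) * (m * (r ^ 2 - w ^ 2) / (w * profileDen r w))
        - (r ^ 2 - w ^ 2) * (1 + w) ^ m * w * (3 + 2 * w) / profileDen r w ^ 3 := by
    rw [fluxProfileDeriv, h1w]
    field_simp
  have herr := fluxProfile_error_le (m := m) (by linarith) hN hr₁ hw hwr hr hrR
  have hPM := le_mul_of_one_le_left hM hP
  linarith

def smallCapThreshold (m r₁ : ℝ) : ℝ := (m - 1) * r₁ / (4 * m * (1 + r₁))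

lemma smallCapThreshold_pos (hm : 1 < m) (hr₁ : 0 < r₁) : 0 < smallCapThreshold m r₁ := by
  have : 0 < m - 1 := by linarith
  have : 0 < m := by linarith
  rw [smallCapThreshold]
  positivity

lemma two_mul_mul_le_of_le_smallCapThreshold (hm : 1 < m) (hr₁ : 0 < r₁) (hw : 0 ≤ w)
    (hr : r₁ / 2 ≤ r) (hδ : w ≤ smallCapThreshold m r₁) :
    2 * m * w * (1 + w) ≤ (m - 1) * r := by
  have hm0 : 0 < m := by linarith
  have hK : 0 < 4 * m * (1 + r₁) := by positivity
  have := smallCapThreshold_pos hm hr₁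
  have hδ_eq : smallCapThreshold m r₁ * (4 * m * (1 + r₁)) = (m - 1) * r₁ := by
    rw [smallCapThreshold]; field_simp
  have hδr₁ : smallCapThreshold m r₁ ≤ r₁ := by
    refine le_of_mul_le_mul_right ?_ hK
    rw [hδ_eq]
    nlinarith [mul_pos hm0 hr₁, mul_pos (mul_pos hm0 hr₁) hr₁]
  calc 2 * m * w * (1 + w) ≤ 2 * m * smallCapThreshold m r₁ * (1 + r₁) := by gcongr; linarith
    _ = (m - 1) * (r₁ / 2) := by linarith
    _ ≤ (m - 1) * r := by gcongr

lemma reduced_subsolution_ineq (hm : 1 < m) (hN : 0 ≤ N) (hr₁ : 0 < r₁) (hw : 0 < w)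
    (hwr : w ≤ r) (hr : r₁ / 2 ≤ r) (hrR : r ≤ R) {γ : ℝ}
    (hγ : R / smallCapThreshold m r₁ + fluxErrorBound m N r₁ R ≤ γ) :
    -γ * (1 + w) + r / w
      ≤ -N * fluxProfile m r w + (r ^ 2 - w ^ 2) / w * fluxProfileDeriv m r w := by
  have hrhs := sub_fluxErrorBound_le hm hN hr₁ hw hwr hr hrR
  have hδ := smallCapThreshold_pos hm hr₁
  have hR : 0 < R := by linarith
  have hC : 0 ≤ fluxErrorBound m N r₁ R := by rw [fluxErrorBound]; positivity
  have hRδ : 0 ≤ R / smallCapThreshold m r₁ := by positivity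
  have hγw : 0 ≤ γ * w := mul_nonneg (by linarith) hw.le
  rcases le_or_gt w (smallCapThreshold m r₁) with hsmall | hlarge
  · have hcap := two_mul_mul_le_of_le_smallCapThreshold hm hr₁ hw.le hr hsmall
    have hrM : r / w ≤ m * (r ^ 2 - w ^ 2) / (w * profileDen r w) := by
      rw [div_le_div_iff₀ hw (mul_pos hw (profileDen_pos hw))]
      nlinarith [mul_profileDen_le hm hw hcap]
    linarith
  · have hrw : r / w ≤ R / smallCapThreshold m r₁ := div_le_div₀ hR.le hrR hδ hlarge.le
    have hM : 0 ≤ m * (r ^ 2 - w ^ 2) / (w * profileDen r w) := by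
      have := profileDen_pos (r := r) hw
      have : 0 ≤ r ^ 2 - w ^ 2 := by nlinarith
      have : 0 < m := by linarith
      positivity
    linarith

end Estimates

section TimeDerivative

variable {m γ r₀ t : ℝ}

lemma Arel_inv_rpow (hm : 1 < m) (hγt : 0 < 1 + γ * t) :
    (Arel m γ t)⁻¹ ^ m = (Arel m γ t)⁻¹ / ((m - 1) * (1 + γ * t)) := by
  have hP : 0 < (m - 1) * (1 + γ * t) := mul_pos (by linarith) hγt
  have hA : 0 < Arel m γ t := Real.rpow_pos_of_pos hP _
  have hA1 : Arel m γ t ^ (m - 1) = (m - 1) * (1 + γ * t) := by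
    rw [Arel, ← Real.rpow_mul hP.le, one_div_mul_cancel (by linarith), Real.rpow_one]
  have hsplit : (Arel m γ t)⁻¹ ^ m = ((Arel m γ t)⁻¹) ^ (m - 1) * (Arel m γ t)⁻¹ := by
    rw [← Real.rpow_add_one (inv_pos.2 hA).ne', sub_add_cancel]
  rw [hsplit, Real.inv_rpow hA.le, hA1]
  ring

lemma hasDerivAt_Arel_inv (hm : 1 < m) (hγt : 0 < 1 + γ * t) :
    HasDerivAt (fun τ => (Arel m γ τ)⁻¹) (-γ * (Arel m γ t)⁻¹ ^ m) t := by
  have hP : 0 < (m - 1) * (1 + γ * t) := mul_pos (by linarith) hγt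
  have hA : 0 < Arel m γ t := Real.rpow_pos_of_pos hP _
  have hPd : HasDerivAt (fun τ => (m - 1) * (1 + γ * τ)) ((m - 1) * γ) t := by
    simpa using (((hasDerivAt_id t).const_mul γ).const_add 1).const_mul (m - 1)
  have hAd := (hPd.rpow_const (p := 1 / (m - 1)) (Or.inl hP.ne')).inv hA.ne'
  refine hAd.congr_deriv ?_
  rw [Arel_inv_rpow hm hγt, Real.rpow_sub_one hP.ne', ← Arel]
  field_simp

lemma hasDerivAt_rrel (hγ : γ ≠ 0) (hm : m ≠ 1) (hγt : 0 < 1 + γ * t) :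
    HasDerivAt (rrel m γ r₀) (1 / ((m - 1) * (1 + γ * t))) t := by
  have hlog := ((((hasDerivAt_id t).const_mul γ).const_add 1).log hγt.ne').div_const
    (γ * (m - 1))
  refine (hlog.const_add r₀).congr_deriv ?_
  field_simp [sub_ne_zero.2 hm, hγt.ne']
  simp

lemma hasDerivAt_uRel_time {N : ℕ} {x : EuclideanSpace ℝ (Fin N)} (hm : 1 < m) (hγ : γ ≠ 0)
    (hγt : 0 < 1 + γ * t) (hx : ‖x‖ < rrel m γ r₀ t) :
    HasDerivAt (fun τ => uRel m γ r₀ τ x)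
      ((Arel m γ t)⁻¹ ^ m * (-γ * (1 + √(rrel m γ r₀ t ^ 2 - ‖x‖ ^ 2))
        + rrel m γ r₀ t / √(rrel m γ r₀ t ^ 2 - ‖x‖ ^ 2))) t := by
  have hw : 0 < rrel m γ r₀ t ^ 2 - ‖x‖ ^ 2 := by
    have := norm_nonneg x
    nlinarith
  have hr := hasDerivAt_rrel (m := m) (r₀ := r₀) hγ hm.ne' hγt
  have hcap := (((hr.pow 2).sub_const (‖x‖ ^ 2)).sqrt hw.ne').const_add 1
  simp only [Pi.pow_apply] at hcap
  refine ((hasDerivAt_Arel_inv hm hγt).mul hcap).congr_deriv ?_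
  have hA : 0 < Arel m γ t := Real.rpow_pos_of_pos (mul_pos (by linarith) hγt) _
  have hsqrt : 0 < √(rrel m γ r₀ t ^ 2 - ‖x‖ ^ 2) := Real.sqrt_pos.2 hw
  rw [Arel_inv_rpow hm hγt]
  field_simp
  ring

lemma le_rrel (hm : 1 < m) (hγ : 0 < γ) (ht : 0 ≤ t) : r₀ ≤ rrel m γ r₀ t :=
  le_add_of_nonneg_right <|
    div_nonneg (Real.log_nonneg (by nlinarith)) (mul_nonneg hγ.le (by linarith))

lemma rrel_le (hm : 1 < m) (hγ : 0 < γ) (hγt : 0 < 1 + γ * t) :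
    rrel m γ r₀ t ≤ r₀ + t / (m - 1) := by
  have hlog : Real.log (1 + γ * t) ≤ γ * t := by
    linarith [Real.log_le_sub_one_of_pos hγt]
  have : 0 < γ * (m - 1) := mul_pos hγ (by linarith)
  calc rrel m γ r₀ t ≤ r₀ + γ * t / (γ * (m - 1)) := by unfold rrel; gcongr
    _ = r₀ + t / (m - 1) := by rw [mul_div_mul_left _ _ hγ.ne']

end TimeDerivative

section Cap

variable {N : ℕ} {m a r : ℝ}

lemma hasDerivAt_sqrt_const_sub {q : ℝ} (hq : q < r) :
    HasDerivAt (fun p => √(r - p)) (-1 / (2 * √(r - q))) q := by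
  refine (((hasDerivAt_id' q).const_sub r).sqrt (sub_pos.2 hq).ne').congr_deriv ?_
  ring

lemma hasGradientAt_cap {z : EuclideanSpace ℝ (Fin N)} (hz : ‖z‖ < r) :
    HasGradientAt (fun y => a * (1 + √(r ^ 2 - ‖y‖ ^ 2)))
      ((-a / √(r ^ 2 - ‖z‖ ^ 2)) • z) z := by
  have hq : ‖z‖ ^ 2 < r ^ 2 := by have := norm_nonneg z; nlinarith
  have hf := ((hasDerivAt_sqrt_const_sub hq).const_add 1).const_mul a
  convert hasGradientAt_comp_norm_sq hf using 2
  field_simp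

lemma fluxRel_eq_of_cap {u : ℝ → EuclideanSpace ℝ (Fin N) → ℝ} {t : ℝ}
    (hu : u t = fun y => a * (1 + √(r ^ 2 - ‖y‖ ^ 2))) (ha : 0 < a)
    {z : EuclideanSpace ℝ (Fin N)} (hz : ‖z‖ < r) :
    fluxRel m u t z = (-(a ^ m * fluxProfile m r √(r ^ 2 - ‖z‖ ^ 2))) • z := by
  have hq : 0 < r ^ 2 - ‖z‖ ^ 2 := by have := norm_nonneg z; nlinarith
  rw [fluxRel, hu, (hasGradientAt_cap hz).gradient, smul_smul, norm_smul, Real.norm_eq_abs]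
  dsimp only
  congr 1
  set w := √(r ^ 2 - ‖z‖ ^ 2) with hw_def
  have hw : 0 < w := Real.sqrt_pos.2 hq
  have hz2 : ‖z‖ ^ 2 = r ^ 2 - w ^ 2 := by rw [hw_def, Real.sq_sqrt hq.le]; ring
  have hroot : √((a * (1 + w)) ^ 2 + (|-a / w| * ‖z‖) ^ 2) = a / w * profileDen r w := by
    rw [profileDen, ← Real.sqrt_sq (by positivity : 0 ≤ a / w), ← Real.sqrt_mul (by positivity)]
    congr 1
    rw [abs_div, abs_neg, abs_of_pos ha, abs_of_pos hw, mul_pow (a / w), hz2]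
    field_simp
    ring
  rw [hroot, fluxProfile, Real.mul_rpow ha.le (by positivity)]
  have := profileDen_pos (r := r) hw
  field_simp

lemma divergence_fluxRel_of_cap {u : ℝ → EuclideanSpace ℝ (Fin N) → ℝ} {t : ℝ}
    (hu : u t = fun y => a * (1 + √(r ^ 2 - ‖y‖ ^ 2))) (ha : 0 < a)
    {x : EuclideanSpace ℝ (Fin N)} (hx : ‖x‖ < r) :
    divergence (fluxRel m u t) x = a ^ m * (-N * fluxProfile m r √(r ^ 2 - ‖x‖ ^ 2)
      + ‖x‖ ^ 2 / √(r ^ 2 - ‖x‖ ^ 2) * fluxProfileDeriv m r √(r ^ 2 - ‖x‖ ^ 2)) := by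
  have hq : ‖x‖ ^ 2 < r ^ 2 := by have := norm_nonneg x; nlinarith
  have hw : 0 < √(r ^ 2 - ‖x‖ ^ 2) := Real.sqrt_pos.2 (sub_pos.2 hq)
  have hg := (((hasDerivAt_fluxProfile (m := m) (r := r) hw).comp (‖x‖ ^ 2)
    (hasDerivAt_sqrt_const_sub hq)).const_mul (a ^ m)).neg
  have hV : fluxRel m u t =ᶠ[𝓝 x]
      fun z => (-(a ^ m * fluxProfile m r √(r ^ 2 - ‖z‖ ^ 2))) • z := by
    filter_upwards [(isOpen_lt continuous_norm continuous_const).mem_nhds hx] with z hz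
    exact fluxRel_eq_of_cap hu ha hz
  rw [divergence_eq_of_eventuallyEq_radial hg hV]
  simp only [Pi.neg_apply, Function.comp_apply]
  field_simp

end Cap

theorem stmt_15_general (N : ℕ) (m T r₁ : ℝ) (hm : 1 < m) (hr₁ : 0 < r₁) :
    ∃ γ₀ : ℝ, 1 ≤ γ₀ ∧ ∀ γ : ℝ, γ₀ ≤ γ → ∀ r₀ ∈ Set.Icc (r₁/2) r₁,
      ∀ (t : ℝ) (x : EuclideanSpace ℝ (Fin N)),
        0 < t → t < T → ‖x‖ < rrel m γ r₀ t →
        deriv (fun s => uRel m γ r₀ s x) t ≤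
          divergence (fluxRel m (uRel m γ r₀ (N := N)) t) x := by
  set R := r₁ + T / (m - 1)
  refine ⟨max 1 (R / smallCapThreshold m r₁ + fluxErrorBound m N r₁ R), le_max_left _ _, ?_⟩
  rintro γ hγ r₀ ⟨hr₀, hr₀'⟩ t x ht htT hx
  have hγ0 : 0 < γ := one_pos.trans_le ((le_max_left _ _).trans hγ)
  have hγt : 0 < 1 + γ * t := by positivity
  set r := rrel m γ r₀ t
  set a := (Arel m γ t)⁻¹
  have ha : 0 < a := inv_pos.2 (Real.rpow_pos_of_pos (mul_pos (by linarith) hγt) _)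
  have hq : ‖x‖ ^ 2 < r ^ 2 := by have := norm_nonneg x; nlinarith
  have hw : 0 < √(r ^ 2 - ‖x‖ ^ 2) := Real.sqrt_pos.2 (sub_pos.2 hq)
  have hwr : √(r ^ 2 - ‖x‖ ^ 2) ≤ r :=
    Real.sqrt_le_iff.2 ⟨(norm_nonneg x).trans hx.le, by nlinarith [norm_nonneg x]⟩
  have hrR : r ≤ R :=
    (rrel_le hm hγ0 hγt).trans (add_le_add hr₀' (div_le_div_of_nonneg_right htT.le (by linarith)))
  have key := reduced_subsolution_ineq hm (Nat.cast_nonneg N) hr₁ hw hwr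
    (by linarith [le_rrel (r₀ := r₀) hm hγ0 ht.le]) hrR ((le_max_right _ _).trans hγ)
  rw [Real.sq_sqrt (sub_pos.2 hq).le, sub_sub_cancel] at key
  rw [(hasDerivAt_uRel_time hm hγ0.ne' hγt hx).deriv,
    divergence_fluxRel_of_cap (u := uRel m γ r₀) rfl ha hx]
  exact mul_le_mul_of_nonneg_left key (by positivity)

/-- for `N ≥ 1`, `m > 1`, `T > 0`, `r₁ > 0` there exists `γ₀ ≥ 1` such
that for every `γ ≥ γ₀` and every `r₀ ∈ [r₁/2, r₁]`, the function
`u(t,x) = A(t)^{−1}(1 + √(r(t)² − |x|²))` satisfies the pointwise inequality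
`∂_t u ≤ div_x (u^m ∇_x u / √(u² + |∇_x u|²))` in `Q₀ = {(t,x) : 0 < t < T, |x| < r(t)}`. -/
theorem stmt_15 (N : ℕ) (hN : 1 ≤ N) (m T r₁ : ℝ) (hm : 1 < m) (hT : 0 < T)
    (hr₁ : 0 < r₁) :
    ∃ γ₀ : ℝ, 1 ≤ γ₀ ∧ ∀ γ : ℝ, γ₀ ≤ γ → ∀ r₀ ∈ Set.Icc (r₁/2) r₁,
      ∀ (t : ℝ) (x : EuclideanSpace ℝ (Fin N)),
        0 < t → t < T → ‖x‖ < rrel m γ r₀ t →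
        deriv (fun s => uRel m γ r₀ s x) t ≤
          divergence (fluxRel m (uRel m γ r₀ (N := N)) t) x :=
  stmt_15_general N m T r₁ hm hr₁

end
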